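/- For every β ∈ (0,1] and every y ∈ (0,1], one has exp(−β·(μ + G_N(p) + 1)·ρ^N(1−y)) ≥ e^{−β(μ+1)}·q_p(y)^β ≥ e^{−β(μ+1)}·y^β. (This lower-bounds the variable message of the weaker user's code in the corner-point density evolution, uniformly in the truncation level N.) -/

import Mathlib

open Real Filter

noncomputable def qp (p x : ℝ) : ℝ :=
  (Real.sqrt ((1 - p) ^ 2 + 4 * p * x) - (1 - p)) / (2 * p)

noncomputable def aCoeff (p : ℝ) (i : ℕ) : ℝ :=
  (∑ k ∈ Finset.range i, (Nat.choose (2 * i - 1) k : ℝ) * p ^ k) /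
    (i * (1 + p) ^ (2 * i - 1))

noncomputable def Gpart (p : ℝ) (N : ℕ) : ℝ := ∑ i ∈ Finset.Icc 1 N, aCoeff p i

noncomputable def Sp (p x : ℝ) : ℝ := - Real.log (qp p (1 - x))

noncomputable def rhoN (p μ : ℝ) (N : ℕ) (x : ℝ) : ℝ :=
  (μ + (∑ i ∈ Finset.Icc 1 N, aCoeff p i * x ^ i) + x ^ N) / (μ + Gpart p N + 1)

noncomputable def lamBarN (p μ : ℝ) (N : ℕ) (x : ℝ) : ℝ :=
  Real.exp (-(μ + Gpart p N + 1) * rhoN p μ N (1 - x))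

noncomputable def deSym (p μ : ℝ) (N : ℕ) (x : ℝ) : ℝ :=
  ((1 - p) + p * lamBarN p μ N x) * lamBarN p μ N x

noncomputable def cornerMap (p μ : ℝ) (N : ℕ) (α ε₁ ε₂ : ℝ) (y : ℝ) : ℝ :=
  ((1 - p) + p * Real.exp (-(α * (1 - ε₁)))) *
    Real.exp (-(α * (1 - ε₂)) * rhoN p μ N (1 - y))

/-!
The `aCoeff p i` are the Taylor coefficients at `0` of `x ↦ -log (qp p (1 - x))` and are
nonnegative, so every truncation `∑_{i ≤ N} aᵢ xⁱ` is at most `-log (qp p (1 - x))`. With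
`x ^ N ≤ 1` this bounds `(μ + G_N + 1) ρ^N(1 - y)` by `μ + 1 - log (qp p y)`, which gives the first
inequality; the second is `y ≤ qp p y`.

The truncation is compared with the function through derivatives. With `κ = p / (1 + p)²`, the
derivative of `-log (qp p (1 - t))` is `(1 + (1 - p) / ((1 + p) √(1 - 4κt))) / (2 (1 - t))`. Its
Taylor coefficients `(1 + (1 - p) / (1 + p) ∑_{m ≤ n} C(2m, m) κᵐ) / 2` equal `(n + 1) a_{n+1}` by
a binomial identity, and `∑ C(2m, m) zᵐ = (1 - 4z)^(-1/2)` because its Cauchy square is `∑ 4ⁿ zⁿ`.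
-/

open Finset

namespace Nat

lemma two_mul_sum_antidiagonal_fst_mul_centralBinom (n : ℕ) :
    2 * ∑ ij ∈ antidiagonal n, ij.1 * (centralBinom ij.1 * centralBinom ij.2) =
      n * ∑ ij ∈ antidiagonal n, centralBinom ij.1 * centralBinom ij.2 := by
  conv_lhs => rw [two_mul]; arg 2; rw [← Finset.Nat.sum_antidiagonal_swap]
  rw [← sum_add_distrib, mul_sum]
  refine sum_congr rfl fun ij hij => ?_
  rw [HasAntidiagonal.mem_antidiagonal] at hij
  simp only [Prod.fst_swap, Prod.snd_swap, ← hij]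
  ring

lemma sum_antidiagonal_centralBinom_mul_centralBinom (n : ℕ) :
    ∑ ij ∈ antidiagonal n, centralBinom ij.1 * centralBinom ij.2 = 4 ^ n := by
  induction n with
  | zero => simp
  | succ n ih =>
    have hT : ∑ ij ∈ antidiagonal (n + 1), ij.1 * (centralBinom ij.1 * centralBinom ij.2) =
        4 * ∑ ij ∈ antidiagonal n, ij.1 * (centralBinom ij.1 * centralBinom ij.2) +
          2 * 4 ^ n := by
      rw [Finset.Nat.sum_antidiagonal_succ, ← ih, mul_sum, mul_sum, ← sum_add_distrib]
      simp only [zero_mul, zero_add, ← mul_assoc, succ_mul_centralBinom_succ]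
      exact sum_congr rfl fun _ _ => by ring
    have hsym := two_mul_sum_antidiagonal_fst_mul_centralBinom n
    have hsym' := two_mul_sum_antidiagonal_fst_mul_centralBinom (n + 1)
    rw [ih] at hsym
    rw [hT] at hsym'
    refine Nat.eq_of_mul_eq_mul_left n.succ_pos ?_
    rw [pow_succ]
    linarith

lemma centralBinom_succ_eq_two_mul_choose (n : ℕ) :
    centralBinom (n + 1) = 2 * (2 * n + 1).choose n := by
  rw [centralBinom_eq_two_mul_choose, show 2 * (n + 1) = 2 * n + 1 + 1 by ring,
    choose_succ_succ, choose_symm_half]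
  ring

end Nat

lemma hasSum_centralBinom_mul_pow {z : ℝ} (hz0 : 0 ≤ z) (hz : 4 * z < 1) :
    HasSum (fun n => (n.centralBinom : ℝ) * z ^ n) (√(1 - 4 * z))⁻¹ := by
  set u : ℕ → ℝ := fun n => n.centralBinom * z ^ n
  have hu0 n : 0 ≤ u n := by positivity
  have hsum : Summable fun n => ‖u n‖ := by
    refine Summable.of_nonneg_of_le (fun n => norm_nonneg _) (fun n => ?_)
      (summable_geometric_of_lt_one (by positivity) hz)
    rw [Real.norm_of_nonneg (hu0 n), mul_pow]
    exact mul_le_mul_of_nonneg_right (mod_cast Nat.centralBinom_le_four_pow n) (by positivity)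
  have hsq : (∑' n, u n) ^ 2 = (1 - 4 * z)⁻¹ := by
    rw [sq, tsum_mul_tsum_eq_tsum_sum_antidiagonal_of_summable_norm hsum hsum,
      ← tsum_geometric_of_lt_one (by positivity) hz]
    refine tsum_congr fun n => ?_
    calc ∑ ij ∈ antidiagonal n, u ij.1 * u ij.2
        = ∑ ij ∈ antidiagonal n,
            ((ij.1.centralBinom * ij.2.centralBinom : ℕ) : ℝ) * z ^ n := by
          refine sum_congr rfl fun ij hij => ?_
          rw [← HasAntidiagonal.mem_antidiagonal.1 hij]
          push_cast
          ring
      _ = (4 * z) ^ n := by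
          rw [← sum_mul, ← Nat.cast_sum, Nat.sum_antidiagonal_centralBinom_mul_centralBinom]
          push_cast
          ring
  rw [← Real.sqrt_inv, ← hsq, Real.sqrt_sq (tsum_nonneg hu0)]
  exact hsum.of_norm.hasSum

section TruncatedBinomial

variable {R : Type*} [CommRing R]

lemma sum_range_choose_succ_mul_pow (m n : ℕ) (x : R) :
    ∑ k ∈ range (n + 1), ((m + 1).choose k : R) * x ^ k =
      ∑ k ∈ range (n + 1), (m.choose k : R) * x ^ k +
        x * ∑ k ∈ range n, (m.choose k : R) * x ^ k := by
  induction n with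
  | zero => simp
  | succ n ih =>
    rw [sum_range_succ, ih, sum_range_succ _ (n + 1), sum_range_succ _ n, Nat.choose_succ_succ]
    push_cast
    ring

lemma two_mul_sum_range_choose_mul_pow (n : ℕ) (x : R) :
    2 * ∑ k ∈ range (n + 1), ((2 * n + 1).choose k : R) * x ^ k =
      (1 + x) ^ (2 * n + 1) +
        (1 - x) * ∑ ij ∈ antidiagonal n,
          (ij.1.centralBinom : R) * x ^ ij.1 * (1 + x) ^ (2 * ij.2) := by
  induction n with
  | zero => simp; ring
  | succ n ih =>
    -- Pascal's rule twice gives, for `L n = ∑_{k ≤ n} C(2n + 1, k) xᵏ`,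
    -- `L (n + 1) = (1 + x)² L n + (1 - x) C(2n + 1, n) xⁿ⁺¹`.
    have h1 := sum_range_choose_succ_mul_pow (2 * n + 2) (n + 1) x
    have h2 := sum_range_choose_succ_mul_pow (2 * n + 1) (n + 1) x
    have h3 := sum_range_choose_succ_mul_pow (2 * n + 1) n x
    have h4 := sum_range_succ (fun k => ((2 * n + 1).choose k : R) * x ^ k) (n + 1)
    have h5 := sum_range_succ (fun k => ((2 * n + 1).choose k : R) * x ^ k) n
    have hc : ((n + 1).centralBinom : R) = 2 * ((2 * n + 1).choose n : R) := by
      rw [Nat.centralBinom_succ_eq_two_mul_choose]; push_cast; ring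
    rw [Nat.choose_symm_half] at h4
    rw [show 2 * (n + 1) + 1 = 2 * n + 2 + 1 by ring, h1, Finset.Nat.sum_antidiagonal_succ', hc]
    simp only [show ∀ j, 2 * (j + 1) = 2 * j + 2 from fun j => rfl, pow_add _ (2 * _) 2,
      ← mul_assoc _ _ ((1 + x) ^ 2), ← sum_mul, mul_zero, pow_zero, mul_one]
    linear_combination (2 : R) * h2 + 2 * x * h3 + 2 * h4 + (-2 * x ^ 2) * h5 + (1 + x) ^ 2 * ih

end TruncatedBinomial

lemma succ_mul_aCoeff_succ {p : ℝ} (hp : 1 + p ≠ 0) (n : ℕ) :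
    (n + 1) * aCoeff p (n + 1) =
      (1 + (1 - p) / (1 + p) *
        ∑ m ∈ range (n + 1), (m.centralBinom : ℝ) * (p / (1 + p) ^ 2) ^ m) / 2 := by
  have hR : (1 + p) ^ (2 * n) *
      ∑ m ∈ range (n + 1), (m.centralBinom : ℝ) * (p / (1 + p) ^ 2) ^ m =
      ∑ ij ∈ antidiagonal n, (ij.1.centralBinom : ℝ) * p ^ ij.1 * (1 + p) ^ (2 * ij.2) := by
    rw [← Finset.Nat.sum_antidiagonal_eq_sum_range_succ
      (fun i _ => (i.centralBinom : ℝ) * (p / (1 + p) ^ 2) ^ i), mul_sum]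
    refine sum_congr rfl fun ij hij => ?_
    rw [← HasAntidiagonal.mem_antidiagonal.1 hij, mul_add, pow_add, div_pow, ← pow_mul]
    field_simp
  have hkey := two_mul_sum_range_choose_mul_pow n p
  rw [← hR] at hkey
  rw [aCoeff, show 2 * (n + 1) - 1 = 2 * n + 1 by omega]
  push_cast
  field_simp
  linear_combination (1 + p) * hkey

lemma hasDerivAt_sum_aCoeff_mul_pow (p : ℝ) (N : ℕ) (t : ℝ) :
    HasDerivAt (fun u => ∑ i ∈ Icc 1 N, aCoeff p i * u ^ i)
      (∑ n ∈ range N, (n + 1) * aCoeff p (n + 1) * t ^ n) t := by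
  refine (HasDerivAt.fun_sum fun i _ => (hasDerivAt_pow i t).const_mul (aCoeff p i)).congr_deriv ?_
  rw [← Ico_add_one_right_eq_Icc, sum_Ico_eq_sum_range, add_tsub_cancel_right]
  refine sum_congr rfl fun n _ => ?_
  rw [add_comm 1 n, add_tsub_cancel_right]
  push_cast
  ring

lemma one_sub_mul_sum_range_partialSum_mul_pow (b : ℕ → ℝ) (t : ℝ) (N : ℕ) :
    (1 - t) * ∑ n ∈ range N, (∑ m ∈ range (n + 1), b m) * t ^ n =
      ∑ m ∈ range N, b m * t ^ m - t ^ N * ∑ m ∈ range N, b m := by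
  induction N with
  | zero => simp
  | succ N ih =>
    rw [sum_range_succ, mul_add, ih]
    simp only [sum_range_succ]
    ring

lemma one_sub_mul_sum_range_partialSum_centralBinom_le {z t : ℝ} (hz : 0 ≤ z) (ht : 0 ≤ t)
    (hzt : 4 * (z * t) < 1) (N : ℕ) :
    (1 - t) * ∑ n ∈ range N, (∑ m ∈ range (n + 1), (m.centralBinom : ℝ) * z ^ m) * t ^ n ≤
      (√(1 - 4 * (z * t)))⁻¹ := by
  rw [one_sub_mul_sum_range_partialSum_mul_pow]
  have hpartial :
      ∑ m ∈ range N, (m.centralBinom : ℝ) * z ^ m * t ^ m ≤ (√(1 - 4 * (z * t)))⁻¹ := by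
    simpa only [mul_pow, mul_assoc] using sum_le_hasSum (range N) (fun m _ => by positivity)
      (hasSum_centralBinom_mul_pow (by positivity) hzt)
  have : 0 ≤ t ^ N * ∑ m ∈ range N, (m.centralBinom : ℝ) * z ^ m := by positivity
  linarith

lemma sum_range_succ_mul_aCoeff_succ_mul_pow_le {p t : ℝ} (hp0 : 0 < p) (hp1 : p < 1)
    (ht0 : 0 ≤ t) (ht1 : t < 1) (N : ℕ) :
    ∑ n ∈ range N, (n + 1) * aCoeff p (n + 1) * t ^ n ≤
      (1 + (1 - p) / √((1 - p) ^ 2 + 4 * p * (1 - t))) / (2 * (1 - t)) := by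
  set κ := p / (1 + p) ^ 2
  set c := (1 - p) / (1 + p)
  set P := fun n => ∑ m ∈ range (n + 1), (m.centralBinom : ℝ) * κ ^ m
  have hc : 0 ≤ c := div_nonneg (by linarith) (by linarith)
  have hκt : 4 * (κ * t) < 1 := by
    rw [show 4 * (κ * t) = 4 * p * t / (1 + p) ^ 2 by ring, div_lt_one (by positivity)]
    nlinarith [sq_nonneg (1 - p)]
  have hs : √((1 - p) ^ 2 + 4 * p * (1 - t)) = (1 + p) * √(1 - 4 * (κ * t)) := by
    rw [← Real.sqrt_sq (by linarith : 0 ≤ 1 + p), ← Real.sqrt_mul (sq_nonneg _)]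
    congr 1
    simp only [κ]
    field_simp
    ring
  have hgeom : (1 - t) * ∑ n ∈ range N, t ^ n ≤ 1 := by
    rw [mul_neg_geom_sum]
    linarith [pow_nonneg ht0 N]
  have hP := mul_le_mul_of_nonneg_left
    (one_sub_mul_sum_range_partialSum_centralBinom_le (by positivity) ht0 hκt N) hc
  have hsplit : ∑ n ∈ range N, (1 + c * P n) / 2 * t ^ n =
      (∑ n ∈ range N, t ^ n + c * ∑ n ∈ range N, P n * t ^ n) / 2 := by
    rw [mul_sum, ← sum_add_distrib, sum_div]
    exact sum_congr rfl fun _ _ => by ring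
  have hcs : (1 - p) / ((1 + p) * √(1 - 4 * (κ * t))) = c * (√(1 - 4 * (κ * t)))⁻¹ := by
    rw [div_mul_eq_div_div, div_eq_mul_inv]
  simp only [succ_mul_aCoeff_succ (by linarith : 1 + p ≠ 0)]
  rw [hsplit, hs, hcs, le_div_iff₀ (by linarith)]
  linarith

lemma qp_pos {p y : ℝ} (hp0 : 0 < p) (hp1 : p < 1) (hy : 0 < y) : 0 < qp p y := by
  refine div_pos (sub_pos.2 ?_) (by linarith)
  rw [Real.lt_sqrt (by linarith)]
  nlinarith

lemma le_qp {p y : ℝ} (hp : 0 < p) (hy0 : 0 ≤ y) (hy1 : y ≤ 1) : y ≤ qp p y := by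
  rw [qp, le_div_iff₀ (by positivity)]
  have := Real.abs_le_sqrt (x := 2 * p * y + (1 - p)) (y := (1 - p) ^ 2 + 4 * p * y) (by
    nlinarith [mul_nonneg (mul_nonneg hp.le hp.le) (mul_nonneg hy0 (sub_nonneg.2 hy1))])
  linarith [le_abs_self (2 * p * y + (1 - p))]

lemma qp_one {p : ℝ} (hp : 0 < p) : qp p 1 = 1 := by
  rw [qp, show (1 - p) ^ 2 + 4 * p * 1 = (1 + p) ^ 2 by ring, Real.sqrt_sq (by linarith)]
  field_simp
  ring

lemma hasDerivAt_qp {p y : ℝ} (hp : p ≠ 0) (hy : 0 < (1 - p) ^ 2 + 4 * p * y) :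
    HasDerivAt (qp p) (√((1 - p) ^ 2 + 4 * p * y))⁻¹ y := by
  have h := ((((hasDerivAt_id y).const_mul (4 * p)).const_add ((1 - p) ^ 2)).sqrt hy.ne').sub_const
    (1 - p) |>.div_const (2 * p)
  have := Real.sqrt_pos.2 hy
  refine h.congr_deriv ?_
  simp only [id]
  field_simp
  ring

lemma hasDerivAt_neg_log_qp_one_sub {p t : ℝ} (hp0 : 0 < p) (hp1 : p < 1) (ht : t < 1) :
    HasDerivAt (fun u => -log (qp p (1 - u)))
      ((1 + (1 - p) / √((1 - p) ^ 2 + 4 * p * (1 - t))) / (2 * (1 - t))) t := by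
  have hw : 0 < (1 - p) ^ 2 + 4 * p * (1 - t) := by nlinarith
  have hq := qp_pos hp0 hp1 (sub_pos.2 ht)
  have h := (((hasDerivAt_qp hp0.ne' hw).comp t ((hasDerivAt_id t).const_sub 1)).log hq.ne').neg
  refine h.congr_deriv ?_
  have hs := Real.sq_sqrt hw.le
  have hs0 := Real.sqrt_pos.2 hw
  have ht' : 1 - t ≠ 0 := by linarith
  simp only [Function.comp_apply]
  rw [qp] at hq ⊢
  set s := √((1 - p) ^ 2 + 4 * p * (1 - t))
  have : s - (1 - p) ≠ 0 := fun h0 => by simp [h0] at hq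
  field_simp
  linear_combination (-1 : ℝ) * hs

lemma sum_aCoeff_mul_pow_le_neg_log_qp {p x : ℝ} (hp0 : 0 < p) (hp1 : p < 1) (N : ℕ)
    (hx0 : 0 ≤ x) (hx1 : x < 1) :
    ∑ i ∈ Icc 1 N, aCoeff p i * x ^ i ≤ -log (qp p (1 - x)) := by
  set F := fun t => -log (qp p (1 - t)) - ∑ i ∈ Icc 1 N, aCoeff p i * t ^ i
  have hF : ∀ t ∈ Set.Ico (0 : ℝ) 1, HasDerivAt F
      ((1 + (1 - p) / √((1 - p) ^ 2 + 4 * p * (1 - t))) / (2 * (1 - t)) -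
        ∑ n ∈ range N, (n + 1) * aCoeff p (n + 1) * t ^ n) t := fun t ht =>
    (hasDerivAt_neg_log_qp_one_sub hp0 hp1 ht.2).sub (hasDerivAt_sum_aCoeff_mul_pow p N t)
  have hmono : MonotoneOn F (Set.Ico 0 1) :=
    monotoneOn_of_hasDerivWithinAt_nonneg (convex_Ico 0 1)
      (fun t ht => (hF t ht).continuousAt.continuousWithinAt)
      (fun t ht => (hF t (interior_subset ht)).hasDerivWithinAt)
      (fun t ht => sub_nonneg.2 <| sum_range_succ_mul_aCoeff_succ_mul_pow_le hp0 hp1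
        (interior_subset ht).1 (interior_subset ht).2 N)
  have h := hmono ⟨le_rfl, one_pos⟩ ⟨hx0, hx1⟩ hx0
  have h0 : ∑ i ∈ Icc 1 N, aCoeff p i * (0 : ℝ) ^ i = 0 :=
    sum_eq_zero fun i hi => by rw [zero_pow (by grind), mul_zero]
  simp only [F, sub_zero, qp_one hp0, log_one, neg_zero, h0] at h
  linarith

lemma aCoeff_nonneg {p : ℝ} (hp : 0 ≤ p) (i : ℕ) : 0 ≤ aCoeff p i := by
  unfold aCoeff
  positivity

lemma mul_rhoN_one_sub_le {p μ y : ℝ} (hp0 : 0 < p) (hp1 : p < 1) (hμ : 0 ≤ μ) (N : ℕ)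
    (hy0 : 0 < y) (hy1 : y ≤ 1) :
    (μ + Gpart p N + 1) * rhoN p μ N (1 - y) ≤ μ + 1 - log (qp p y) := by
  have hG : 0 ≤ Gpart p N := sum_nonneg fun i _ => aCoeff_nonneg hp0.le i
  have hsum := sum_aCoeff_mul_pow_le_neg_log_qp hp0 hp1 N (x := 1 - y) (by linarith) (by linarith)
  rw [sub_sub_cancel] at hsum
  have hpow : (1 - y) ^ N ≤ 1 := pow_le_one₀ (by linarith) (by linarith)
  rw [rhoN, mul_div_cancel₀ _ (by linarith)]
  linarith

theorem stmt13_general (p : ℝ) (hp0 : 0 < p) (hp1 : p < 1) (μ : ℝ) (hμ : 0 < μ)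
    (N : ℕ) :
    ∀ β : ℝ, 0 < β → β ≤ 1 → ∀ y : ℝ, 0 < y → y ≤ 1 →
      Real.exp (-(β * (μ + 1))) * (qp p y) ^ β ≤
        Real.exp (-(β * (μ + Gpart p N + 1) * rhoN p μ N (1 - y))) ∧
      Real.exp (-(β * (μ + 1))) * y ^ β ≤
        Real.exp (-(β * (μ + 1))) * (qp p y) ^ β := by
  intro β hβ0 _ y hy0 hy1
  have hq := qp_pos hp0 hp1 hy0
  refine ⟨?_, by gcongr; exact le_qp hp0 hy0.le hy1⟩
  rw [Real.rpow_def_of_pos hq, ← Real.exp_add, Real.exp_le_exp]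
  have := mul_le_mul_of_nonneg_left (mul_rhoN_one_sub_le hp0 hp1 hμ.le N hy0 hy1) hβ0.le
  linarith

theorem stmt13 (p : ℝ) (hp0 : 0 < p) (hp1 : p < 1) (μ : ℝ) (hμ : 0 < μ)
    (N : ℕ) (hN : 1 ≤ N) :
    ∀ β : ℝ, 0 < β → β ≤ 1 → ∀ y : ℝ, 0 < y → y ≤ 1 →
      Real.exp (-(β * (μ + 1))) * (qp p y) ^ β ≤
        Real.exp (-(β * (μ + Gpart p N + 1) * rhoN p μ N (1 - y))) ∧
      Real.exp (-(β * (μ + 1))) * y ^ β ≤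
        Real.exp (-(β * (μ + 1))) * (qp p y) ^ β :=
  stmt13_general p hp0 hp1 μ hμ N
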